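/- Let σ be a permutation of {1,…,n} and H = {h_1 < … < h_p} ⊆ {1,…,n} with complement K = {k_1 < … < k_q}. Let σ(H) denote the tuple (σ(h_1),…,σ(h_p)), let σ[H] denote the set {σ(h_1),…,σ(h_p)}, and let τ_H be the unique permutation of {1,…,p} that rearranges the increasing enumeration of σ[H] into the tuple σ(H); define τ_K analogously. Then ρ_(σ[H]σ[K]) · sign(τ_H) · sign(τ_K) = sign(σ) · ρ_(HK), where ρ_(σ[H]σ[K]) is the shuffle sign of the subset σ[H] of {1,…,n}. (This is the sign identity proved inside Proposition 6.11 of the paper, showing the coproduct Δ⁰ descends to oriented chord diagrams: Δ⁰(D_{σ(1…n)}) ∼_ω sign(σ)·Δ⁰(D_{1…n}).) -/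
import Mathlib


/-- `τ` is the shuffle permutation of the subset `H ⊆ Fin n` (with `p = H.card`):
it maps the first `p` positions monotonically onto `H` and the remaining
positions monotonically onto the complement of `H`.  The shuffle sign
`ρ_(HK)` of the paper is the sign of (the inverse of) this permutation, which
sends the sequence `(h_1,…,h_p,k_1,…,k_q)` to `(1,…,n)`. -/
def IsShufflePerm {n : ℕ} (p : ℕ) (H : Finset (Fin n)) (τ : Equiv.Perm (Fin n)) : Prop :=
  (∀ i : Fin n, ((i : ℕ) < p ↔ τ i ∈ H)) ∧
  (∀ i j : Fin n, i < j → (((i : ℕ) < p) ↔ ((j : ℕ) < p)) → τ i < τ j)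

/-- `e : Fin p → Fin n` is the increasing enumeration of the finite set `S`. -/
def IsMonoEnum {n p : ℕ} (S : Finset (Fin n)) (e : Fin p → Fin n) : Prop :=
  StrictMono e ∧ ∀ a : Fin n, a ∈ S ↔ ∃ i, e i = a

lemma monoEnum_unique {n p : ℕ} {S : Finset (Fin n)} (hS : S.card = p)
    {e f : Fin p → Fin n} (he : IsMonoEnum S e)
    (hf : StrictMono f) (hmem : ∀ i, f i ∈ S) : f = e := by
  have h1 : f = S.orderEmbOfFin hS := Finset.orderEmbOfFin_unique hS hmem hf
  have h2 : e = S.orderEmbOfFin hS :=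
    Finset.orderEmbOfFin_unique hS (fun i => (he.2 (e i)).mpr ⟨i, rfl⟩) he.1
  rw [h1, h2]

lemma shuffle_left {n p q : ℕ} {S : Finset (Fin n)} (hS : S.card = p) (hSc : Sᶜ.card = q)
    {τ : Equiv.Perm (Fin n)} (hτ : IsShufflePerm p S τ)
    {e : Fin p → Fin n} (he : IsMonoEnum S e) (a : Fin p) :
    τ ⟨a.1, lt_of_lt_of_le a.2 (hS ▸ S.card_le_univ.trans_eq (by simp))⟩ = e a := by
  have hpn : p ≤ n := hS ▸ S.card_le_univ.trans_eq (by simp)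
  set f : Fin p → Fin n := fun a => τ ⟨a.1, lt_of_lt_of_le a.2 hpn⟩ with hfdef
  have hf : StrictMono f := by
    intro a b hab
    exact hτ.2 _ _ (Fin.mk_lt_mk.mpr hab) (by simp [a.2, b.2])
  have hmem : ∀ a, f a ∈ S := fun a => (hτ.1 ⟨a.1, lt_of_lt_of_le a.2 hpn⟩).mp a.2
  exact congrFun (monoEnum_unique hS he hf hmem) a

lemma shuffle_right {n p q : ℕ} {S : Finset (Fin n)} (hS : S.card = p) (hSc : Sᶜ.card = q)
    {τ : Equiv.Perm (Fin n)} (hτ : IsShufflePerm p S τ)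
    {e : Fin q → Fin n} (he : IsMonoEnum Sᶜ e) (b : Fin q) :
    τ ⟨p + b.1, by
      have h1 := b.2
      have : p + q = n := by
        simpa [hS, hSc] using Finset.card_add_card_compl S
      omega⟩ = e b := by
  have hn : p + q = n := by simpa [hS, hSc] using Finset.card_add_card_compl S
  set f : Fin q → Fin n := fun b => τ ⟨p + b.1, by have := b.2; omega⟩ with hfdef
  have hf : StrictMono f := by
    intro a b hab
    exact hτ.2 _ _ (Fin.mk_lt_mk.mpr (by simpa using hab)) (by simp)
  have hmem : ∀ b, f b ∈ Sᶜ := by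
    intro b
    rw [Finset.mem_compl]
    intro hmem
    have := (hτ.1 ⟨p + b.1, by have := b.2; omega⟩).mpr hmem
    simp at this
  exact congrFun (monoEnum_unique hSc he hf hmem) b

/-!
Sign identity inside Proposition 6.11: with `σ` a permutation of `{1,…,n}`,
`H = {h_1 < … < h_p}` with complement `K = {k_1 < … < k_q}`, `σ[H]` the image
set of `H`, and `τ_H` (resp. `τ_K`) the permutation of `{1,…,p}` (resp.
`{1,…,q}`) rearranging the increasing enumeration of `σ[H]` (resp. `σ[K]`)
into the tuple `(σ(h_1),…,σ(h_p))` (resp. `(σ(k_1),…,σ(k_q))`), one has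
`ρ_(σ[H]σ[K]) · sign(τ_H) · sign(τ_K) = sign(σ) · ρ_(HK)`.
-/
theorem shuffle_sign_of_perm_image
    (n p q : ℕ) (σ : Equiv.Perm (Fin n)) (H : Finset (Fin n))
    (hp : H.card = p) (hq : Hᶜ.card = q)
    (eH : Fin p → Fin n) (heH : IsMonoEnum H eH)
    (eK : Fin q → Fin n) (heK : IsMonoEnum Hᶜ eK)
    (eσH : Fin p → Fin n) (heσH : IsMonoEnum (H.image σ) eσH)
    (eσK : Fin q → Fin n) (heσK : IsMonoEnum (Hᶜ.image σ) eσK)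
    (τH : Equiv.Perm (Fin p)) (hτH : ∀ i : Fin p, eσH (τH i) = σ (eH i))
    (τK : Equiv.Perm (Fin q)) (hτK : ∀ i : Fin q, eσK (τK i) = σ (eK i))
    (τHK : Equiv.Perm (Fin n)) (hτHK : IsShufflePerm p H τHK)
    (τσ : Equiv.Perm (Fin n)) (hτσ : IsShufflePerm p (H.image σ) τσ) :
    Equiv.Perm.sign τσ * Equiv.Perm.sign τH * Equiv.Perm.sign τK
      = Equiv.Perm.sign σ * Equiv.Perm.sign τHK := by
  have hn : p + q = n := by simpa [hp, hq] using Finset.card_add_card_compl H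
  have hpσ : (H.image σ).card = p := by
    rw [Finset.card_image_of_injective _ σ.injective, hp]
  have himg : (H.image σ)ᶜ = Hᶜ.image σ := by
    ext x
    simp only [Finset.mem_compl, Finset.mem_image, not_exists]
    constructor
    · intro h
      exact ⟨σ.symm x, by
        constructor
        · intro hm
          exact (h (σ.symm x)) ⟨hm, σ.apply_symm_apply x⟩
        · exact σ.apply_symm_apply x⟩
    · rintro ⟨a, ha, rfl⟩ b ⟨hb, hba⟩
      exact ha (σ.injective hba ▸ hb)
  have hqσ : (H.image σ)ᶜ.card = q := by
    rw [himg, Finset.card_image_of_injective _ σ.injective, hq]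
  have heσK' : IsMonoEnum (H.image σ)ᶜ eσK := himg ▸ heσK
  -- the block permutation
  let E : (Fin p ⊕ Fin q) ≃ Fin n := finSumFinEquiv.trans (finCongr hn)
  let β : Equiv.Perm (Fin n) := E.permCongr (Equiv.sumCongr τH τK)
  have hsignβ : Equiv.Perm.sign β = Equiv.Perm.sign τH * Equiv.Perm.sign τK := by
    simp [β, Equiv.Perm.sign_permCongr, Equiv.Perm.sign_sumCongr]
  have hEl : ∀ a : Fin p, E (Sum.inl a) = ⟨a.1, by omega⟩ := by
    intro a; simp [E, finCongr]; rfl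
  have hEr : ∀ b : Fin q, E (Sum.inr b) = ⟨p + b.1, by omega⟩ := by
    intro b; simp [E, finCongr]; rfl
  have key : τσ * β = σ * τHK := by
    ext i
    simp only [Equiv.Perm.mul_apply]
    rcases lt_or_ge (i : ℕ) p with h | h
    · set a : Fin p := ⟨i.1, h⟩ with ha
      have hi : i = E (Sum.inl a) := by rw [hEl]
      have hβ : β i = E (Sum.inl (τH a)) := by
        rw [hi]; simp [β, Equiv.permCongr_apply]
      rw [hβ, hEl]
      rw [shuffle_left hpσ hqσ hτσ heσH (τH a), hτH a]
      rw [hi, hEl]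
      rw [shuffle_left hp hq hτHK heH a]
    · set b : Fin q := ⟨i.1 - p, by omega⟩ with hb
      have hi : i = E (Sum.inr b) := by rw [hEr]; exact Fin.ext (by simp [hb]; omega)
      have hβ : β i = E (Sum.inr (τK b)) := by
        rw [hi]; simp [β, Equiv.permCongr_apply]
      rw [hβ, hEr]
      rw [shuffle_right hpσ hqσ hτσ heσK' (τK b), hτK b]
      rw [hi, hEr]
      rw [shuffle_right hp hq hτHK heK b]
  have := congrArg Equiv.Perm.sign key
  simp only [map_mul, hsignβ] at this
  rw [mul_assoc, this]
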